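/- arXiv:2111.13006 — 7 statements merged into one kernel-verified Lean document; each statement's English description precedes it below -/
import Mathlib

section
/- Let X be a metric space, (Ω,𝓕,ℙ) a probability space with a random flow {θ_t}, and (ψ,Θ) a nonautonomous random dynamical system on X possessing a nonautonomous random attractor {𝒜(ω_τ) : ω_τ ∈ ℝ×Ω}. Let ξ* : ℝ×Ω → X be a global solution of (ψ,Θ) such that for each ω_τ the set {ξ*(Θ_t ω_τ) : t ≤ 0} is bounded. Then for every ω_τ ∈ ℝ×Ω, the time-0 section of the unstable set of ξ* is contained in the attractor: W^u(ξ*;ω_τ)(0) ⊆ 𝒜(ω_τ). -/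
open Filter Topology MeasureTheory

open Set

/-! A point `z` of the unstable set lies on a complete trajectory `ζ` that converges backwards to
`ξ`. Its past `ζ '' Iic 0` is bounded: far in the past `ζ` stays close to the bounded backward
orbit of `ξ`, and on the remaining compact time interval it is a continuous image. Pullback
attraction of this bounded set then puts `z = ζ 0` at distance `0` from the closed set `𝓐 p`. -/

section Bounded

variable {α X : Type*} [LinearOrder α] [PseudoMetricSpace X]

theorem isBounded_image_Iic_of_Iic_of_Icc {f : α → X} {a S : α}
    (hIic : Bornology.IsBounded (f '' Iic S)) (hIcc : Bornology.IsBounded (f '' Icc S a)) :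
    Bornology.IsBounded (f '' Iic a) := by
  refine (hIic.union hIcc).subset ?_
  rw [← image_union]
  exact image_mono Iic_subset_Iic_union_Icc

theorem exists_isBounded_image_Iic_of_tendsto_dist [Nonempty α] {f g : α → X} {a : α}
    (hg : Bornology.IsBounded (g '' Iic a))
    (hfg : Tendsto (fun s => dist (f s) (g s)) atBot (𝓝 0)) :
    ∃ S, Bornology.IsBounded (f '' Iic S) := by
  obtain ⟨S₀, hS₀⟩ := eventually_atBot.mp (hfg.eventually_lt_const one_pos)
  refine ⟨min S₀ a, (hg.thickening (δ := 1)).subset ?_⟩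
  rintro _ ⟨s, hs, rfl⟩
  exact Metric.mem_thickening_iff.mpr
    ⟨g s, mem_image_of_mem g (hs.trans (min_le_right _ _)), hS₀ s (hs.trans (min_le_left _ _))⟩

end Bounded

def IsCompleteTrajectory {P X : Type*} (ψ : ℝ → P → X → X) (Θ : ℝ → P → P) (p : P)
    (ζ : ℝ → X) : Prop :=
  ∀ a b : ℝ, b ≤ a → ψ (a - b) (Θ b p) (ζ b) = ζ a

namespace IsCompleteTrajectory

variable {P X : Type*} [PseudoMetricSpace X] {ψ : ℝ → P → X → X} {Θ : ℝ → P → P} {p : P}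
  {ζ : ℝ → X}

theorem isBounded_image_Icc (hζ : IsCompleteTrajectory ψ Θ p ζ) {a b : ℝ}
    (hψ : ContinuousOn (fun q : ℝ × X => ψ q.1 (Θ b p) q.2) {q | 0 ≤ q.1}) :
    Bornology.IsBounded (ζ '' Icc b a) := by
  have hcont : ContinuousOn (fun s : ℝ => ψ (s - b) (Θ b p) (ζ b)) (Icc b a) :=
    hψ.comp (f := fun s => (s - b, ζ b)) (by fun_prop) fun _ hs => sub_nonneg.mpr hs.1
  rw [image_congr fun s hs => (hζ s b hs.1).symm]
  exact (isCompact_Icc.image_of_continuousOn hcont).isBounded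

theorem isBounded_image_Iic (hζ : IsCompleteTrajectory ψ Θ p ζ)
    (hψ : ∀ p', ContinuousOn (fun q : ℝ × X => ψ q.1 p' q.2) {q | 0 ≤ q.1})
    {g : ℝ → X} {a : ℝ} (hg : Bornology.IsBounded (g '' Iic a))
    (hζg : Tendsto (fun s => dist (ζ s) (g s)) atBot (𝓝 0)) :
    Bornology.IsBounded (ζ '' Iic a) :=
  have ⟨_, hS⟩ := exists_isBounded_image_Iic_of_tendsto_dist hg hζg
  isBounded_image_Iic_of_Iic_of_Icc hS (hζ.isBounded_image_Icc (hψ _))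

theorem mem_of_pullback_attracts (hζ : IsCompleteTrajectory ψ Θ p ζ) {A : Set X}
    (hA : IsClosed A) (hAne : A.Nonempty)
    (hattr : ∀ ε > (0 : ℝ), ∃ T : ℝ, ∀ t ≥ T, ∀ x ∈ ζ '' Iic 0,
      Metric.infDist (ψ t (Θ (-t) p) x) A < ε) :
    ζ 0 ∈ A := by
  have hsmall : ∀ ε > (0 : ℝ), Metric.infDist (ζ 0) A < ε := by
    intro ε hε
    obtain ⟨T, hT⟩ := hattr ε hε
    have ht : (0 : ℝ) ≤ max T 0 := le_max_right _ _
    have hpull : ψ (max T 0) (Θ (-max T 0) p) (ζ (-max T 0)) = ζ 0 := by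
      simpa using hζ 0 (-max T 0) (neg_nonpos.mpr ht)
    rw [← hpull]
    exact hT _ (le_max_left _ _) _ (mem_image_of_mem ζ (neg_nonpos.mpr ht))
  refine (hA.mem_iff_infDist_zero hAne).mpr (le_antisymm ?_ Metric.infDist_nonneg)
  exact le_of_forall_pos_lt_add fun ε hε => by simpa using hsmall ε hε

end IsCompleteTrajectory

theorem unstable_set_subset_attractor_general
    {X : Type*} [MetricSpace X] {Ω : Type*}
    -- driving flow
    (Θ : ℝ → ℝ × Ω → ℝ × Ω)
    -- nonautonomous random dynamical system (co-cycle)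
    (ψ : ℝ → ℝ × Ω → X → X)
    (hψcont : ∀ p : ℝ × Ω,
      ContinuousOn (fun q : ℝ × X => ψ q.1 p q.2) {q : ℝ × X | 0 ≤ q.1})
    -- the nonautonomous random attractor: nonempty compact sections,
    (𝓐 : ℝ × Ω → Set X)
    (h𝓐comp : ∀ p : ℝ × Ω, IsCompact (𝓐 p))
    (h𝓐ne : ∀ p : ℝ × Ω, (𝓐 p).Nonempty)
    -- pullback attraction of bounded sets,
    (h𝓐attr : ∀ p : ℝ × Ω, ∀ B : Set X, Bornology.IsBounded B →
      ∀ ε > (0:ℝ), ∃ T : ℝ, ∀ t ≥ T, ∀ b ∈ B,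
        Metric.infDist (ψ t (Θ (-t) p) b) (𝓐 p) < ε)
    -- a global solution of the co-cycle with bounded backwards trajectory
    (ξ : ℝ × Ω → X)
    (hξbdd : ∀ p : ℝ × Ω,
      Bornology.IsBounded ((fun t : ℝ => ξ (Θ t p)) '' Set.Iic (0:ℝ)))
    -- the sections of the unstable set of `ξ`
    (Wu : ℝ × Ω → ℝ → Set X)
    (hWu : ∀ (p : ℝ × Ω) (t : ℝ), Wu p t =
      {z : X | ∃ ζ : ℝ → X,
        (∀ a b : ℝ, b ≤ a → ψ (a - b) (Θ b p) (ζ b) = ζ a) ∧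
        ζ t = z ∧
        Tendsto (fun s => dist (ζ s) (ξ (Θ s p))) atBot (𝓝 0)})
    (p : ℝ × Ω) :
    Wu p 0 ⊆ 𝓐 p := by
  rintro _ hz
  rw [hWu] at hz
  obtain ⟨ζ, hζ, rfl, hζξ⟩ := hz
  have hζ : IsCompleteTrajectory ψ Θ p ζ := hζ
  exact hζ.mem_of_pullback_attracts (h𝓐comp p).isClosed (h𝓐ne p)
    (h𝓐attr p _ (hζ.isBounded_image_Iic hψcont (hξbdd p) hζξ))

/-- If `(ψ, Θ)` is a nonautonomous random dynamical system with a nonautonomous random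
attractor `𝓐` and `ξ` is a global solution whose backwards trajectory is bounded at each
`ω_τ`, then the time-`0` section of the unstable set of `ξ` is contained in the attractor. -/
theorem unstable_set_subset_attractor
    {X : Type*} [MetricSpace X] {Ω : Type*} [MeasurableSpace Ω]
    (μ : Measure Ω) [IsProbabilityMeasure μ]
    -- random flow
    (θ : ℝ → Ω → Ω)
    (hθ0 : θ 0 = id)
    (hθadd : ∀ t s : ℝ, θ (t + s) = θ t ∘ θ s)
    (hθmeas : ∀ t : ℝ, Measurable (θ t))
    -- driving flow
    (Θ : ℝ → ℝ × Ω → ℝ × Ω)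
    (hΘ : ∀ (t : ℝ) (p : ℝ × Ω), Θ t p = (t + p.1, θ t p.2))
    -- nonautonomous random dynamical system (co-cycle)
    (ψ : ℝ → ℝ × Ω → X → X)
    (hψ0 : ∀ p : ℝ × Ω, ψ 0 p = id)
    (hψcoc : ∀ t s : ℝ, 0 ≤ t → 0 ≤ s → ∀ p : ℝ × Ω,
      ψ (t + s) p = ψ t (Θ s p) ∘ ψ s p)
    (hψcont : ∀ p : ℝ × Ω,
      ContinuousOn (fun q : ℝ × X => ψ q.1 p q.2) {q : ℝ × X | 0 ≤ q.1})
    -- the nonautonomous random attractor: nonempty compact sections,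
    (𝓐 : ℝ × Ω → Set X)
    (h𝓐comp : ∀ p : ℝ × Ω, IsCompact (𝓐 p))
    (h𝓐ne : ∀ p : ℝ × Ω, (𝓐 p).Nonempty)
    -- invariance,
    (h𝓐inv : ∀ t : ℝ, 0 ≤ t → ∀ p : ℝ × Ω, ψ t p '' 𝓐 p = 𝓐 (Θ t p))
    -- pullback attraction of bounded sets,
    (h𝓐attr : ∀ p : ℝ × Ω, ∀ B : Set X, Bornology.IsBounded B →
      ∀ ε > (0:ℝ), ∃ T : ℝ, ∀ t ≥ T, ∀ b ∈ B,
        Metric.infDist (ψ t (Θ (-t) p) b) (𝓐 p) < ε)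
    -- and minimality among closed pullback attracting families
    (h𝓐min : ∀ F : ℝ × Ω → Set X, (∀ p, IsClosed (F p)) →
      (∀ p : ℝ × Ω, ∀ B : Set X, Bornology.IsBounded B →
        ∀ ε > (0:ℝ), ∃ T : ℝ, ∀ t ≥ T, ∀ b ∈ B,
          Metric.infDist (ψ t (Θ (-t) p) b) (F p) < ε) →
      ∀ p : ℝ × Ω, 𝓐 p ⊆ F p)
    -- a global solution of the co-cycle with bounded backwards trajectory
    (ξ : ℝ × Ω → X)
    (hξ : ∀ t : ℝ, 0 ≤ t → ∀ p : ℝ × Ω, ψ t p (ξ p) = ξ (Θ t p))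
    (hξbdd : ∀ p : ℝ × Ω,
      Bornology.IsBounded ((fun t : ℝ => ξ (Θ t p)) '' Set.Iic (0:ℝ)))
    -- the sections of the unstable set of `ξ`
    (Wu : ℝ × Ω → ℝ → Set X)
    (hWu : ∀ (p : ℝ × Ω) (t : ℝ), Wu p t =
      {z : X | ∃ ζ : ℝ → X,
        (∀ a b : ℝ, b ≤ a → ψ (a - b) (Θ b p) (ζ b) = ζ a) ∧
        ζ t = z ∧
        Tendsto (fun s => dist (ζ s) (ξ (Θ s p))) atBot (𝓝 0)})
    (p : ℝ × Ω) :
    Wu p 0 ⊆ 𝓐 p :=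
  unstable_set_subset_attractor_general Θ ψ hψcont 𝓐 h𝓐comp h𝓐ne h𝓐attr ξ hξbdd Wu hWu p
end

section
/- Let (X,d) be a metric space and S = {S(t,s) : t ≥ s} an evolution process on X with a pullback attractor {𝒜(t)}_{t∈ℝ} such that ⋃_{t≤0} 𝒜(t) is bounded. Then for every t ∈ ℝ, 𝒜(t) = ⋃ { W^u(ξ)(t) : ξ is a backwards-bounded global solution of S }, where a global solution ξ is backwards-bounded if ξ((−∞,0]) is a bounded subset of X. In particular, every point of 𝒜(t) lies on a backwards-bounded global solution of S, and conversely the time-t section of the unstable set of every backwards-bounded global solution is contained in 𝒜(t). -/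
open Filter Topology

/-- Backward orbit chain through a point, given exact step-surjectivity. -/
lemma exists_backward_chain {X : Type*} (A : ℕ → Set X) (f : ℕ → X → X)
    (hsurj : ∀ n, f n '' A (n+1) = A n) (z : X) (hz : z ∈ A 0) :
    ∃ c : ℕ → X, c 0 = z ∧ (∀ n, c n ∈ A n) ∧ ∀ n, f n (c (n+1)) = c n := by
  have key : ∀ n, ∀ x ∈ A n, ∃ y, y ∈ A (n+1) ∧ f n y = x := by
    intro n x hx
    rw [← hsurj n] at hx
    rcases hx with ⟨y, hy, hyx⟩
    exact ⟨y, hy, hyx⟩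
  choose g hg1 hg2 using key
  let d : ∀ n : ℕ, {y : X // y ∈ A n} := fun n =>
    Nat.rec ⟨z, hz⟩ (fun m p => ⟨g m p.1 p.2, hg1 m p.1 p.2⟩) n
  refine ⟨fun n => (d n).1, rfl, fun n => (d n).2, fun n => ?_⟩
  exact hg2 n (d n).1 (d n).2

/-- If an evolution process `S` has a pullback attractor `𝓐` with `⋃_{t ≤ 0} 𝓐(t)` bounded,
then `𝓐(t)` is the union, over all backwards-bounded global solutions `ξ` of `S`, of the
time-`t` sections of their unstable sets. -/
theorem pullback_attractor_eq_union_unstable_sets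
    {X : Type*} [MetricSpace X]
    -- evolution process
    (S : ℝ → ℝ → X → X)
    (hSid : ∀ t : ℝ, S t t = id)
    (hScomp : ∀ t s r : ℝ, r ≤ s → s ≤ t → S t s ∘ S s r = S t r)
    (hScont : ContinuousOn (fun q : ℝ × ℝ × X => S q.1 q.2.1 q.2.2)
      {q : ℝ × ℝ × X | q.2.1 ≤ q.1})
    -- pullback attractor
    (𝓐 : ℝ → Set X)
    (h𝓐comp : ∀ t : ℝ, IsCompact (𝓐 t))
    (h𝓐ne : ∀ t : ℝ, (𝓐 t).Nonempty)
    (h𝓐inv : ∀ t s : ℝ, s ≤ t → S t s '' 𝓐 s = 𝓐 t)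
    (h𝓐attr : ∀ t : ℝ, ∀ B : Set X, Bornology.IsBounded B →
      ∀ ε > (0:ℝ), ∃ s₀ : ℝ, ∀ s ≤ s₀, ∀ b ∈ B,
        Metric.infDist (S t s b) (𝓐 t) < ε)
    (h𝓐min : ∀ F : ℝ → Set X, (∀ t, IsClosed (F t)) →
      (∀ t : ℝ, ∀ B : Set X, Bornology.IsBounded B →
        ∀ ε > (0:ℝ), ∃ s₀ : ℝ, ∀ s ≤ s₀, ∀ b ∈ B,
          Metric.infDist (S t s b) (F t) < ε) →
      ∀ t : ℝ, 𝓐 t ⊆ F t)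
    -- bounded past union of sections
    (hbdd : Bornology.IsBounded (⋃ t ∈ Set.Iic (0:ℝ), 𝓐 t))
    (t : ℝ) :
    𝓐 t = ⋃ ξ ∈ {ξ : ℝ → X |
        (∀ a b : ℝ, b ≤ a → S a b (ξ b) = ξ a) ∧
        Bornology.IsBounded (ξ '' Set.Iic (0:ℝ))},
      {z : X | ∃ ζ : ℝ → X,
        (∀ a b : ℝ, b ≤ a → S a b (ζ b) = ζ a) ∧
        ζ t = z ∧
        Tendsto (fun s => dist (ζ s) (ξ s)) atBot (𝓝 0)} := by
  apply Set.Subset.antisymm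
  · -- 𝓐 t ⊆ union : construct a backwards-bounded global solution through each point
    intro z hz
    -- chain at integer times
    have hsurj : ∀ n : ℕ,
        (fun x => S (t - n) (t - (n+1:ℕ)) x) '' 𝓐 (t - (n+1:ℕ)) = 𝓐 (t - n) := by
      intro n
      apply h𝓐inv
      push_cast
      linarith
    obtain ⟨c, hc0, hcA, hcstep⟩ :=
      exists_backward_chain (fun n : ℕ => 𝓐 (t - n))
        (fun n x => S (t - n) (t - (n+1:ℕ)) x) hsurj z (by simpa using hz)
    -- compatibility along the chain
    have hcomp : ∀ m k : ℕ, m ≤ k → S (t - m) (t - k) (c k) = c m := by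
      intro m k hmk
      induction k, hmk using Nat.le_induction with
      | base => rw [hSid]; rfl
      | succ k hmk ih =>
        have h1 : t - ((k:ℝ)+1) ≤ t - k := by linarith
        have h2 : t - (k:ℝ) ≤ t - m := by
          have : (m:ℝ) ≤ k := Nat.cast_le.2 hmk
          linarith
        have := congrFun (hScomp (t - m) (t - k) (t - ((k:ℝ)+1)) h1 h2) (c (k+1))
        have hstep := hcstep k
        push_cast at hstep ⊢
        simp only [Function.comp_apply] at this
        rw [← this, hstep, ih]
    -- the global solution
    set N : ℝ → ℕ := fun s => ⌈t - s⌉₊ with hN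
    have hNle : ∀ s : ℝ, t - (N s : ℝ) ≤ s := by
      intro s
      have := Nat.le_ceil (t - s)
      simp only [hN]
      linarith
    set ζ : ℝ → X := fun s => S s (t - (N s : ℝ)) (c (N s)) with hζ
    have hζmem : ∀ s : ℝ, ζ s ∈ 𝓐 s := by
      intro s
      rw [← h𝓐inv s (t - (N s : ℝ)) (hNle s)]
      exact Set.mem_image_of_mem _ (hcA (N s))
    have hsol : ∀ a b : ℝ, b ≤ a → S a b (ζ b) = ζ a := by
      intro a b hba
      have hNab : N a ≤ N b := Nat.ceil_le_ceil (by linarith)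
      have hcastN : ((N a : ℝ)) ≤ (N b : ℝ) := Nat.cast_le.2 hNab
      have h1 : t - (N b : ℝ) ≤ b := hNle b
      have h2 : t - (N a : ℝ) ≤ a := hNle a
      have e1 := congrFun (hScomp a b (t - (N b : ℝ)) h1 hba) (c (N b))
      have e2 := congrFun (hScomp a (t - (N a : ℝ)) (t - (N b : ℝ))
        (by linarith) h2) (c (N b))
      simp only [Function.comp_apply] at e1 e2
      rw [hζ]
      simp only
      rw [e1, ← e2, hcomp (N a) (N b) hNab]
    have hζt : ζ t = z := by
      have hNt : N t = 0 := by simp [hN]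
      rw [hζ]
      simp only [hNt, Nat.cast_zero, sub_zero, hSid, id_eq, hc0]
    have hζbdd : Bornology.IsBounded (ζ '' Set.Iic (0:ℝ)) := by
      apply hbdd.subset
      rintro _ ⟨s, hs, rfl⟩
      exact Set.mem_biUnion hs (hζmem s)
    refine Set.mem_biUnion (show ζ ∈ _ from ⟨hsol, hζbdd⟩) ?_
    exact ⟨ζ, hsol, hζt, by simp only [dist_self]; exact (tendsto_const_nhds : Tendsto (fun _ : ℝ => (0:ℝ)) atBot (𝓝 0))⟩
  · -- union ⊆ 𝓐 t
    intro z hz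
    rw [Set.mem_iUnion₂] at hz
    obtain ⟨ξ, ⟨hξsol, hξbdd⟩, ζ, hζsol, hζt, htend⟩ := hz
    -- eventually ζ s is within distance 1 of ξ s
    have hev : ∀ᶠ s in atBot, dist (ζ s) (ξ s) < 1 := htend.eventually (gt_mem_nhds one_pos)
    obtain ⟨s₁', hs₁'⟩ := eventually_atBot.1 hev
    set s₁ : ℝ := min s₁' (min 0 t) with hs₁def
    set B : Set X := Metric.cthickening 1 (ξ '' Set.Iic (0:ℝ)) with hB
    have hBbdd : Bornology.IsBounded B := hξbdd.cthickening
    have hζB : ∀ s ≤ s₁, ζ s ∈ B := by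
      intro s hs
      have hss₁' : s ≤ s₁' := le_trans hs (min_le_left _ _)
      have hs0 : s ≤ 0 := le_trans hs (le_trans (min_le_right _ _) (min_le_left _ _))
      exact Metric.mem_cthickening_of_dist_le (ζ s) (ξ s) 1 _
        (Set.mem_image_of_mem _ hs0) (le_of_lt (hs₁' s hss₁'))
    have hinf : ∀ ε > (0:ℝ), Metric.infDist z (𝓐 t) < ε := by
      intro ε hε
      obtain ⟨s₀, hs₀⟩ := h𝓐attr t B hBbdd ε hε
      set s : ℝ := min s₀ s₁ with hsdef
      have hss₀ : s ≤ s₀ := min_le_left _ _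
      have hss₁ : s ≤ s₁ := min_le_right _ _
      have hst : s ≤ t := le_trans hss₁ (le_trans (min_le_right _ _) (min_le_right _ _))
      have := hs₀ s hss₀ (ζ s) (hζB s hss₁)
      rwa [hζsol t s hst, hζt] at this
    have hzero : Metric.infDist z (𝓐 t) = 0 := by
      rcases lt_or_ge 0 (Metric.infDist z (𝓐 t)) with h | h
      · exact absurd (hinf _ h) (lt_irrefl _)
      · exact le_antisymm h Metric.infDist_nonneg
    exact ((h𝓐comp t).isClosed.mem_iff_infDist_zero (h𝓐ne t)).2 hzero
end

section
/- (Backward exponential bound (4.14) and localization of solutions on the unstable set.) Let X be a normed space, s ∈ ℝ, M ≥ 1, L ≥ 0, α > 0, ρ ≥ 0. Let u : (−∞,s] → [0,∞) be continuous and bounded with u(t) ≤ M e^{α(t−s)} u(s) + ρM(1+L) ∫_t^s e^{α(t−r)} u(r) dr for all t ≤ s, and let ζ : (−∞,s] → X satisfy ‖ζ(t)‖ ≤ (1+L) u(t) for all t ≤ s and u(s) ≤ M ‖ζ(s)‖. Then ‖ζ(t)‖ ≤ M²(1+L) e^{(α−ρM(1+L))(t−s)} ‖ζ(s)‖ for all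 t ≤ s. Moreover, if in addition α ≥ ρM(1+L) and δ > 0 satisfies ‖ζ(s)‖ ≤ δ / (M²(1+L)), then ‖ζ(t)‖ ≤ δ for all t ≤ s. -/
/-- Backward Grönwall inequality in integral form, for a globally continuous
function. -/
lemma gronwall_backward (s k A : ℝ) (hk : 0 ≤ k)
    (w : ℝ → ℝ) (hw : Continuous w)
    (h : ∀ t ≤ s, w t ≤ A + k * ∫ r in t..s, w r) :
    ∀ t ≤ s, w t ≤ A * Real.exp (k * (s - t)) := by
  intro t ht
  set φ : ℝ → ℝ := fun x => ∫ r in x..s, w r with hφ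
  have hφd : ∀ x : ℝ, HasDerivAt φ (-(w x)) x := by
    intro x
    have h1 : HasDerivAt (fun y => ∫ r in s..y, w r) (w x) x :=
      intervalIntegral.integral_hasDerivAt_right
        (hw.intervalIntegrable s x)
        (hw.stronglyMeasurableAtFilter _ _)
        hw.continuousAt
    have h2 : HasDerivAt (fun y => -∫ r in s..y, w r) (-(w x)) x := h1.neg
    convert h2 using 2 with y
    rw [hφ]
    exact intervalIntegral.integral_symm s y
  set g : ℝ → ℝ := fun x => (A + k * φ x) * Real.exp (k * x) with hg
  have hgd : ∀ x : ℝ, HasDerivAt g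
      (k * -(w x) * Real.exp (k * x) + (A + k * φ x) * (Real.exp (k * x) * k)) x := by
    intro x
    have he : HasDerivAt (fun x : ℝ => Real.exp (k * x)) (Real.exp (k * x) * k) x := by
      simpa using ((hasDerivAt_id x).const_mul k).exp
    exact (((hφd x).const_mul k).const_add A).mul he
  have hgc : Continuous g := by
    rw [continuous_iff_continuousAt]
    exact fun x => (hgd x).continuousAt
  have hmono : MonotoneOn g (Set.Icc t s) := by
    apply monotoneOn_of_deriv_nonneg (convex_Icc t s) hgc.continuousOn
    · intro x hx
      exact (hgd x).differentiableAt.differentiableWithinAt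
    · intro x hx
      rw [interior_Icc] at hx
      rw [(hgd x).deriv]
      have hwx : w x ≤ A + k * φ x := h x hx.2.le
      have h0 : 0 ≤ k * (A + k * φ x - w x) := mul_nonneg hk (by linarith)
      have hE : 0 < Real.exp (k * x) := Real.exp_pos _
      nlinarith
  have hts : g t ≤ g s := hmono (Set.left_mem_Icc.2 ht) (Set.right_mem_Icc.2 ht) ht
  have hφs : φ s = 0 := intervalIntegral.integral_same
  have hEt : 0 < Real.exp (k * t) := Real.exp_pos _
  have hkey : (A + k * φ t) * Real.exp (k * t) ≤
      (A * Real.exp (k * (s - t))) * Real.exp (k * t) := by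
    have : (A * Real.exp (k * (s - t))) * Real.exp (k * t) = A * Real.exp (k * s) := by
      rw [mul_assoc, ← Real.exp_add]; ring_nf
    rw [this]
    calc (A + k * φ t) * Real.exp (k * t) = g t := rfl
      _ ≤ g s := hts
      _ = A * Real.exp (k * s) := by rw [hg]; simp [hφs]
  have h3 : A + k * φ t ≤ A * Real.exp (k * (s - t)) :=
    le_of_mul_le_mul_right hkey hEt
  calc w t ≤ A + k * φ t := h t ht
    _ ≤ A * Real.exp (k * (s - t)) := h3

/-- Backward exponential bound (4.14) and localization of solutions on the unstable set. -/
theorem backward_bound_and_localization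
    {X : Type*} [NormedAddCommGroup X] [NormedSpace ℝ X]
    (s M L α ρ : ℝ) (hM : 1 ≤ M) (hL : 0 ≤ L) (hα : 0 < α) (hρ : 0 ≤ ρ)
    (u : ℝ → ℝ) (ζ : ℝ → X)
    (hcont : ContinuousOn u (Set.Iic s))
    (hbdd : ∃ C : ℝ, ∀ t ≤ s, u t ≤ C)
    (hnonneg : ∀ t ≤ s, 0 ≤ u t)
    (hineq : ∀ t ≤ s, u t ≤ M * Real.exp (α * (t - s)) * u s
      + ρ * M * (1 + L) * ∫ r in t..s, Real.exp (α * (t - r)) * u r)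
    (hζ : ∀ t ≤ s, ‖ζ t‖ ≤ (1 + L) * u t)
    (hus : u s ≤ M * ‖ζ s‖) :
    (∀ t ≤ s, ‖ζ t‖ ≤
      M ^ 2 * (1 + L) * Real.exp ((α - ρ * M * (1 + L)) * (t - s)) * ‖ζ s‖) ∧
    (∀ δ : ℝ, 0 < δ → ρ * M * (1 + L) ≤ α → ‖ζ s‖ ≤ δ / (M ^ 2 * (1 + L)) →
      ∀ t ≤ s, ‖ζ t‖ ≤ δ) := by
  set k : ℝ := ρ * M * (1 + L) with hkdef
  have hk : 0 ≤ k := by positivity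
  -- continuous extension of u to all of ℝ
  set v : ℝ → ℝ := fun x => u (min x s) with hvdef
  have hvcont : Continuous v :=
    hcont.comp_continuous (continuous_id.min continuous_const)
      (fun x => min_le_right x s)
  have hveq : ∀ x ≤ s, v x = u x := fun x hx => by
    rw [hvdef]; simp [min_eq_left hx]
  set w : ℝ → ℝ := fun x => Real.exp (α * (s - x)) * v x with hwdef
  have hwcont : Continuous w := (Real.continuous_exp.comp (by continuity)).mul hvcont
  have hint : ∀ t ≤ s, (∫ r in t..s, w r) = ∫ r in t..s, Real.exp (α * (s - r)) * u r := by
    intro t ht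
    apply intervalIntegral.integral_congr
    intro r hr
    rw [Set.uIcc_of_le ht] at hr
    simp only [hwdef]
    rw [hveq r hr.2]
  have hgron : ∀ t ≤ s, w t ≤ (M * u s) * Real.exp (k * (s - t)) := by
    apply gronwall_backward s k (M * u s) hk w hwcont
    intro t ht
    have hE : (0:ℝ) < Real.exp (α * (s - t)) := Real.exp_pos _
    have h1 := hineq t ht
    have h2 : Real.exp (α * (s - t)) *
        (∫ r in t..s, Real.exp (α * (t - r)) * u r)
        = ∫ r in t..s, Real.exp (α * (s - r)) * u r := by
      rw [← intervalIntegral.integral_const_mul]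
      apply intervalIntegral.integral_congr
      intro r hr
      show Real.exp (α * (s - t)) * (Real.exp (α * (t - r)) * u r)
        = Real.exp (α * (s - r)) * u r
      rw [← mul_assoc, ← Real.exp_add]
      congr 2
      ring
    have h3 : w t = Real.exp (α * (s - t)) * u t := by
      show Real.exp (α * (s - t)) * v t = _
      rw [hveq t ht]
    have h4 : Real.exp (α * (s - t)) * (M * Real.exp (α * (t - s)) * u s) = M * u s := by
      rw [show Real.exp (α * (s - t)) * (M * Real.exp (α * (t - s)) * u s)
        = (Real.exp (α * (s - t)) * Real.exp (α * (t - s))) * (M * u s) by ring,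
        ← Real.exp_add]
      ring_nf
      simp
    have h5 : Real.exp (α * (s - t)) * u t ≤
        Real.exp (α * (s - t)) * (M * Real.exp (α * (t - s)) * u s
          + k * ∫ r in t..s, Real.exp (α * (t - r)) * u r) :=
      mul_le_mul_of_nonneg_left h1 hE.le
    rw [h3, hint t ht]
    calc Real.exp (α * (s - t)) * u t
        ≤ Real.exp (α * (s - t)) * (M * Real.exp (α * (t - s)) * u s
          + k * ∫ r in t..s, Real.exp (α * (t - r)) * u r) := h5
      _ = M * u s + k * (Real.exp (α * (s - t)) *
          ∫ r in t..s, Real.exp (α * (t - r)) * u r) := by rw [← h4]; ring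
      _ = M * u s + k * ∫ r in t..s, Real.exp (α * (s - r)) * u r := by rw [h2]
  have hmain : ∀ t ≤ s, ‖ζ t‖ ≤
      M ^ 2 * (1 + L) * Real.exp ((α - k) * (t - s)) * ‖ζ s‖ := by
    intro t ht
    have hE : (0:ℝ) < Real.exp (α * (s - t)) := Real.exp_pos _
    have hu : u t ≤ M * u s * Real.exp ((α - k) * (t - s)) := by
      have hw1 : Real.exp (α * (s - t)) * u t ≤ (M * u s) * Real.exp (k * (s - t)) := by
        have h0 := hgron t ht
        have h3 : w t = Real.exp (α * (s - t)) * u t := by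
          show Real.exp (α * (s - t)) * v t = _
          rw [hveq t ht]
        rwa [h3] at h0
      have hsplit : M * u s * Real.exp ((α - k) * (t - s)) * Real.exp (α * (s - t))
          = (M * u s) * Real.exp (k * (s - t)) := by
        rw [mul_assoc, ← Real.exp_add]
        congr 2
        ring
      have := (div_le_div_iff_of_pos_right hE).2 hw1
      nlinarith [Real.exp_pos ((α - k) * (t - s)), Real.exp_pos (k * (s - t))]
    have hζt := hζ t ht
    have hE2 : (0:ℝ) < Real.exp ((α - k) * (t - s)) := Real.exp_pos _
    have hns : (0:ℝ) ≤ ‖ζ s‖ := norm_nonneg _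
    have hM0 : (0:ℝ) < M := by linarith
    calc ‖ζ t‖ ≤ (1 + L) * u t := hζt
      _ ≤ (1 + L) * (M * u s * Real.exp ((α - k) * (t - s))) := by
          apply mul_le_mul_of_nonneg_left hu (by linarith)
      _ ≤ (1 + L) * (M * (M * ‖ζ s‖) * Real.exp ((α - k) * (t - s))) := by
          apply mul_le_mul_of_nonneg_left _ (by linarith)
          apply mul_le_mul_of_nonneg_right _ hE2.le
          exact mul_le_mul_of_nonneg_left hus hM0.le
      _ = M ^ 2 * (1 + L) * Real.exp ((α - k) * (t - s)) * ‖ζ s‖ := by ring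
  refine ⟨hmain, ?_⟩
  intro δ hδ hkα hζs t ht
  have hE2 : Real.exp ((α - k) * (t - s)) ≤ 1 := by
    rw [Real.exp_le_one_iff]
    exact mul_nonpos_iff.2 (Or.inl ⟨by linarith, by linarith⟩)
  have hC : (0:ℝ) < M ^ 2 * (1 + L) := by nlinarith
  have hns : (0:ℝ) ≤ ‖ζ s‖ := norm_nonneg _
  have h1 := hmain t ht
  have h2 : M ^ 2 * (1 + L) * ‖ζ s‖ ≤ δ := by
    have := mul_le_mul_of_nonneg_left hζs hC.le
    rwa [mul_div_cancel₀ _ hC.ne'] at this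
  nlinarith [Real.exp_pos ((α - k) * (t - s))]
end

section
/- (Pathwise stationary Ornstein–Uhlenbeck solution, part of Lemma 7.1.) Let ω : ℝ → ℝ be continuous with ω(s)/s → 0 as s → −∞. For t ∈ ℝ define the Wiener shift (θ_t ω)(s) := ω(t+s) − ω(t) and z(t) := −∫_{−∞}^0 e^{s} (θ_t ω)(s) ds. Then: (i) for every t the integral defining z(t) converges absolutely and z(t) = ω(t) − ∫_{−∞}^t e^{u−t} ω(u) du; (ii) t ↦ z(t) is continuous; and (iii) z solves the Langevin equation dz + z dt = dW pathwise in integral form: for all r ≤ t, z(t) − z(r) + ∫_r^t z(u) du = ω(t) − ω(r). -/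
open Filter Topology MeasureTheory

/-
The closed formula comes from the substitution `u = t + s`:
`z t = ω t - φ t` with `φ t = ∫_{-∞}^t e^{u-t} ω u du = e^{-t} ∫_{-∞}^t e^u ω u du`, where the
sublinear growth of `ω` at `-∞` makes `e^u ω u` integrable there. Differentiating the product
gives `φ' = ω - φ = z`, so `∫_r^t z = φ t - φ r`, which is the integral form of `dz + z dt = dW`.
-/

open Set Real Asymptotics

theorem isBigO_id_exp_neg_half_atBot : (id : ℝ → ℝ) =O[atBot] fun u => exp (-u / 2) := by
  refine IsBigO.of_bound 2 ?_
  filter_upwards [eventually_le_atBot 0] with u hu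
  have := add_one_le_exp (-u / 2)
  rw [id, norm_of_nonpos hu, norm_of_nonneg (exp_pos _).le]
  linarith

theorem integrableOn_Iic_exp_mul_of_isBigO_id {f : ℝ → ℝ} (hf : Continuous f)
    (hfO : f =O[atBot] id) (a : ℝ) : IntegrableOn (fun u => exp u * f u) (Iic a) := by
  have hO : (fun u => exp u * f u) =O[atBot] fun u => exp (1 / 2 * u) :=
    ((isBigO_refl exp atBot).mul (hfO.trans isBigO_id_exp_neg_half_atBot)).congr_right
      fun u => by rw [← exp_add]; ring_nf
  exact LocallyIntegrableOn.integrableOn_of_isBigO_atBot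
    ((continuous_exp.mul hf).locallyIntegrable.locallyIntegrableOn _) hO
    ⟨Iic 0, Iic_mem_atBot 0, integrableOn_exp_mul_Iic one_half_pos 0⟩

theorem integrableOn_Iic_comp_const_add_iff {E : Type*} [NormedAddCommGroup E] {g : ℝ → E}
    (t b : ℝ) :
    IntegrableOn (fun s => g (t + s)) (Iic b) ↔ IntegrableOn g (Iic (t + b)) := by
  have h := (measurePreserving_add_left volume t).integrableOn_comp_preimage
    (measurableEmbedding_addLeft t) (f := g) (s := Iic (t + b))
  rwa [preimage_const_add_Iic, add_sub_cancel_left] at h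

section

variable {E : Type*} [NormedAddCommGroup E] [NormedSpace ℝ E]

theorem setIntegral_Iic_comp_const_add (g : ℝ → E) (t b : ℝ) :
    ∫ s in Iic b, g (t + s) = ∫ u in Iic (t + b), g u := by
  have h := (measurePreserving_add_left volume t).setIntegral_preimage_emb
    (measurableEmbedding_addLeft t) g (Iic (t + b))
  rwa [preimage_const_add_Iic, add_sub_cancel_left] at h

theorem hasDerivAt_setIntegral_Iic [CompleteSpace E] {g : ℝ → E} (hg : Continuous g)
    (hgi : ∀ a, IntegrableOn g (Iic a)) (t : ℝ) :
    HasDerivAt (fun t => ∫ u in Iic t, g u) (g t) t := by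
  have h : (fun t => ∫ u in Iic t, g u) = fun t => (∫ u in Iic 0, g u) + ∫ u in 0..t, g u :=
    funext fun t => by rw [← intervalIntegral.integral_Iic_sub_Iic (hgi 0) (hgi t)]; abel
  rw [h]
  exact (hg.integral_hasStrictDerivAt 0 t).hasDerivAt.const_add _

end

noncomputable def expMovingAverage (f : ℝ → ℝ) (t : ℝ) : ℝ :=
  ∫ u in Iic t, exp (u - t) * f u

theorem exp_sub_mul_eq (u t x : ℝ) : exp (u - t) * x = exp (-t) * (exp u * x) := by
  rw [sub_eq_neg_add, exp_add, mul_assoc]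

theorem expMovingAverage_eq (f : ℝ → ℝ) (t : ℝ) :
    expMovingAverage f t = exp (-t) * ∫ u in Iic t, exp u * f u := by
  simp only [expMovingAverage, exp_sub_mul_eq, integral_const_mul]

/-- The exponent `t + s - t` is kept so that the first term is `g (t + s)` with
`g u = exp (u - t) * f u`, the integrand of `expMovingAverage f t`. -/
theorem exp_mul_shift_sub (f : ℝ → ℝ) (t s : ℝ) :
    exp s * (f (t + s) - f t) = exp (t + s - t) * f (t + s) - exp s * f t := by
  rw [add_sub_cancel_left, mul_sub]

section

variable {f : ℝ → ℝ}

theorem integrableOn_exp_sub_mul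
    (hf : ∀ a, IntegrableOn (fun u => exp u * f u) (Iic a)) (t : ℝ) :
    IntegrableOn (fun u => exp (u - t) * f u) (Iic t) := by
  simp only [exp_sub_mul_eq]
  exact (hf t).const_mul _

theorem hasDerivAt_expMovingAverage
    (hf : ∀ a, IntegrableOn (fun u => exp u * f u) (Iic a)) (hfc : Continuous f) (t : ℝ) :
    HasDerivAt (expMovingAverage f) (f t - expMovingAverage f t) t := by
  have h := ((hasDerivAt_neg t).exp).mul
    (hasDerivAt_setIntegral_Iic (g := fun u => exp u * f u) (continuous_exp.mul hfc) hf t)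
  rw [funext (expMovingAverage_eq f)]
  refine h.congr_deriv ?_
  rw [← mul_assoc, ← exp_add, neg_add_cancel, exp_zero]
  ring

theorem integrableOn_exp_sub_mul_const_add
    (hf : ∀ a, IntegrableOn (fun u => exp u * f u) (Iic a)) (t : ℝ) :
    IntegrableOn (fun s => exp (t + s - t) * f (t + s)) (Iic 0) :=
  (integrableOn_Iic_comp_const_add_iff t 0).2 (by simpa using integrableOn_exp_sub_mul hf t)

theorem integrableOn_exp_mul_shift_sub
    (hf : ∀ a, IntegrableOn (fun u => exp u * f u) (Iic a)) (t : ℝ) :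
    IntegrableOn (fun s => exp s * (f (t + s) - f t)) (Iic 0) := by
  simp only [exp_mul_shift_sub]
  exact (integrableOn_exp_sub_mul_const_add hf t).sub ((integrableOn_exp_Iic 0).mul_const _)

theorem setIntegral_exp_mul_shift_sub
    (hf : ∀ a, IntegrableOn (fun u => exp u * f u) (Iic a)) (t : ℝ) :
    ∫ s in Iic 0, exp s * (f (t + s) - f t) = expMovingAverage f t - f t := by
  simp only [exp_mul_shift_sub]
  rw [integral_sub (integrableOn_exp_sub_mul_const_add hf t)
      ((integrableOn_exp_Iic 0).mul_const _),
    setIntegral_Iic_comp_const_add (fun u => exp (u - t) * f u), add_zero,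
    integral_mul_const, integral_exp_Iic_zero, one_mul, expMovingAverage]

end

/-- Pathwise stationary Ornstein–Uhlenbeck solution: for a continuous path `ω` with
`ω s / s → 0` as `s → −∞`, setting `z t = −∫_{−∞}^0 e^s (θ_t ω)(s) ds` with the Wiener
shift `(θ_t ω)(s) = ω(t+s) − ω(t)`, the defining integrals converge absolutely,
`z t = ω t − ∫_{−∞}^t e^{u−t} ω u du`, `z` is continuous, and `z` solves the Langevin
equation `dz + z dt = dW` pathwise in integral form. -/
theorem pathwise_ou_solution
    (ω : ℝ → ℝ) (hω : Continuous ω)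
    (hsub : Tendsto (fun s => ω s / s) atBot (𝓝 0))
    (z : ℝ → ℝ)
    (hz : ∀ t : ℝ, z t = -∫ s in Set.Iic (0:ℝ), Real.exp s * (ω (t + s) - ω t)) :
    -- (i) absolute convergence of the defining integrals and the closed formula
    (∀ t : ℝ,
      IntegrableOn (fun s => Real.exp s * (ω (t + s) - ω t)) (Set.Iic (0:ℝ)) ∧
      IntegrableOn (fun u => Real.exp (u - t) * ω u) (Set.Iic t) ∧
      z t = ω t - ∫ u in Set.Iic t, Real.exp (u - t) * ω u) ∧
    -- (ii) continuity of the trajectory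
    Continuous z ∧
    -- (iii) the pathwise integral form of `dz + z dt = dW`
    (∀ r t : ℝ, r ≤ t → z t - z r + ∫ u in r..t, z u = ω t - ω r) := by
  have hO : ω =O[atBot] id :=
    ((isLittleO_iff_tendsto' ((eventually_lt_atBot 0).mono fun s hs h => absurd h hs.ne)).2
      hsub).isBigO
  have hint := integrableOn_Iic_exp_mul_of_isBigO_id hω hO
  have hz' : z = fun t => ω t - expMovingAverage ω t :=
    funext fun t => by rw [hz, setIntegral_exp_mul_shift_sub hint]; ring
  have hderiv : ∀ t, HasDerivAt (expMovingAverage ω) (z t) t := fun t => by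
    rw [hz']; exact hasDerivAt_expMovingAverage hint hω t
  have hzc : Continuous z := by
    rw [hz']
    exact hω.sub (continuous_iff_continuousAt.2 fun t => (hderiv t).continuousAt)
  refine ⟨fun t => ⟨integrableOn_exp_mul_shift_sub hint t, integrableOn_exp_sub_mul hint t,
    by rw [hz']; rfl⟩, hzc, fun r t _ => ?_⟩
  rw [intervalIntegral.integral_eq_sub_of_hasDerivAt (fun u _ => hderiv u)
    (hzc.intervalIntegrable r t), hz']
  ring
end

section
/- (Sublinear growth of the stationary Ornstein–Uhlenbeck solution, part of Lemma 7.1.) Let ω : ℝ → ℝ be continuous with ω(t)/t → 0 as t → +∞ and as t → −∞. Define z(t) := ω(t) − ∫_{−∞}^t e^{u−t} ω(u) du (the integral converging absolutely for each t). Then z(t)/t → 0 as t → +∞ and as t → −∞. -/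
open Filter Topology MeasureTheory

section OUAux

open Set

private lemma expc_intervalIntegral' {c : ℝ} (hc : 0 < c) (t y : ℝ) :
    ∫ u in y..t, Real.exp (c * (u - t)) = 1 / c - Real.exp (c * (y - t)) / c := by
  have h : ∀ u ∈ Set.uIcc y t, HasDerivAt (fun v => Real.exp (c * (v - t)) / c)
      (Real.exp (c * (u - t))) u := by
    intro u _
    have h1 : HasDerivAt (fun v : ℝ => c * (v - t)) c u := by
      simpa using ((hasDerivAt_id u).sub_const t).const_mul c
    have h2 := ((Real.hasDerivAt_exp (c * (u - t))).comp u h1).div_const c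
    simpa [mul_div_cancel_right₀ _ hc.ne'] using h2
  have hint : IntervalIntegrable (fun u => Real.exp (c * (u - t))) volume y t :=
    (Real.continuous_exp.comp (by continuity)).intervalIntegrable y t
  rw [intervalIntegral.integral_eq_sub_of_hasDerivAt h hint]
  simp [sub_self]

private lemma expc_integrableOn' {c : ℝ} (hc : 0 < c) (t : ℝ) :
    IntegrableOn (fun u => Real.exp (c * (u - t))) (Iic t) := by
  refine integrableOn_Iic_of_intervalIntegral_norm_bounded (1 / c) t
    (fun y => (Real.continuous_exp.comp (by continuity)).integrableOn_Ioc) tendsto_id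
    (eventually_of_mem (Iic_mem_atBot t) fun y hy => ?_)
  simp only [id, Real.norm_eq_abs, abs_of_nonneg (Real.exp_pos _).le]
  rw [expc_intervalIntegral' hc t y]
  exact sub_le_self _ (by positivity)

private lemma expc_integral' {c : ℝ} (hc : 0 < c) (t : ℝ) :
    ∫ u in Iic t, Real.exp (c * (u - t)) = 1 / c := by
  refine tendsto_nhds_unique
    (intervalIntegral_tendsto_integral_Iic t (expc_integrableOn' hc t) tendsto_id) ?_
  have h1 : Tendsto (fun y : ℝ => c * (y - t)) atBot atBot := by
    apply Tendsto.const_mul_atBot hc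
    exact tendsto_atBot_add_const_right atBot (-t) tendsto_id
  have h2 := ((Real.tendsto_exp_atBot.comp h1).div_const c).const_sub (1 / c)
  simp only [expc_intervalIntegral' hc t]
  simpa using h2

private lemma ou_lin_bound (ω : ℝ → ℝ) (hω : Continuous ω)
    (htop : Tendsto (fun t => ω t / t) atTop (𝓝 0))
    (hbot : Tendsto (fun t => ω t / t) atBot (𝓝 0))
    {ε : ℝ} (hε : 0 < ε) :
    ∃ D : ℝ, 0 ≤ D ∧ ∀ u : ℝ, |ω u| ≤ ε * |u| + D := by
  have h1 : ∀ᶠ t in atTop, |ω t| / |t| < ε := by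
    have := Metric.tendsto_nhds.mp htop ε hε
    simpa [Real.dist_eq] using this
  have h2 : ∀ᶠ t in atBot, |ω t| / |t| < ε := by
    have := Metric.tendsto_nhds.mp hbot ε hε
    simpa [Real.dist_eq] using this
  obtain ⟨A, hA⟩ := eventually_atTop.mp h1
  obtain ⟨B, hB⟩ := eventually_atBot.mp h2
  set a := max A 1 with ha
  set b := min B (-1) with hb
  obtain ⟨M, hM⟩ := (isCompact_Icc (a := b) (b := a)).exists_bound_of_continuousOn
    hω.continuousOn
  refine ⟨max M 0, le_max_right _ _, fun u => ?_⟩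
  rcases le_or_gt u a with hua | hua
  · rcases le_or_gt b u with hbu | hbu
    · have : |ω u| ≤ M := by simpa using hM u ⟨hbu, hua⟩
      have h0 : 0 ≤ ε * |u| := by positivity
      calc |ω u| ≤ M := this
        _ ≤ max M 0 := le_max_left _ _
        _ ≤ ε * |u| + max M 0 := by linarith
    · have huB : u ≤ B := le_of_lt (lt_of_lt_of_le hbu (min_le_left _ _))
      have hu1 : u < 0 := lt_of_lt_of_le (lt_of_lt_of_le hbu (min_le_right _ _)) (by norm_num)
      have := hB u huB
      have habs : (0:ℝ) < |u| := abs_pos.mpr (ne_of_lt hu1)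
      have h3 : |ω u| < ε * |u| := by
        rw [div_lt_iff₀ (by positivity)] at this
        linarith
      nlinarith [le_max_right M (0:ℝ)]
  · have huA : A ≤ u := le_of_lt (lt_of_le_of_lt (le_max_left _ _) hua)
    have hu1 : 0 < u := lt_of_lt_of_le (by norm_num) (le_of_lt (lt_of_le_of_lt (le_max_right _ _) hua))
    have := hA u huA
    have h3 : |ω u| < ε * |u| := by
      rw [div_lt_iff₀ (by positivity)] at this
      linarith
    nlinarith [le_max_right M (0:ℝ)]

private lemma ou_key_bound (ω : ℝ → ℝ) (hω : Continuous ω) {ε D : ℝ} (hε : 0 < ε)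
    (hlin : ∀ u, |ω u| ≤ ε * |u| + D) (t : ℝ) :
    IntegrableOn (fun u => Real.exp (u - t) * ω u) (Iic t) ∧
    |∫ u in Iic t, Real.exp (u - t) * ω u| ≤ ε * |t| + (D + 4 * ε) := by
  set g : ℝ → ℝ := fun u => (ε * |t| + D) * Real.exp (1 * (u - t))
      + (2 * ε) * Real.exp ((1/2) * (u - t)) with hg_def
  have hg : IntegrableOn g (Iic t) :=
    ((expc_integrableOn' one_pos t).const_mul _).add
      ((expc_integrableOn' (by norm_num : (0:ℝ) < 1/2) t).const_mul _)
  have hpt : ∀ u ∈ Iic t, ‖Real.exp (u - t) * ω u‖ ≤ g u := by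
    intro u hu
    have hut : u ≤ t := hu
    have he : (0:ℝ) < Real.exp (u - t) := Real.exp_pos _
    have habs : |u| ≤ |t| + (t - u) := by
      rw [abs_le]
      constructor
      · linarith [neg_abs_le t]
      · linarith [le_abs_self t]
    have h1 : ‖Real.exp (u - t) * ω u‖ = Real.exp (u - t) * |ω u| := by
      rw [Real.norm_eq_abs, abs_mul, abs_of_pos he]
    have h2 : Real.exp (u - t) * |ω u| ≤ Real.exp (u - t) * (ε * (|t| + (t - u)) + D) := by
      apply mul_le_mul_of_nonneg_left _ he.le
      calc |ω u| ≤ ε * |u| + D := hlin u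
        _ ≤ ε * (|t| + (t - u)) + D := by nlinarith
    have hE : Real.exp (u - t) = Real.exp ((u - t)/2) * Real.exp ((u - t)/2) := by
      rw [← Real.exp_add]; ring_nf
    have hE2 : Real.exp ((t - u)/2) * Real.exp ((u - t)/2) = 1 := by
      rw [← Real.exp_add, show (t - u)/2 + (u - t)/2 = 0 by ring, Real.exp_zero]
    have h3 : (t - u)/2 ≤ Real.exp ((t - u)/2) :=
      le_trans (by linarith) (Real.add_one_le_exp _)
    have h4 : (t - u) * Real.exp (u - t) ≤ 2 * Real.exp ((u - t)/2) := by
      rw [hE]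
      nlinarith [Real.exp_pos ((u - t)/2), Real.exp_pos ((t - u)/2)]
    rw [h1]
    rw [hg_def]
    simp only [one_mul]
    calc Real.exp (u - t) * |ω u| ≤ Real.exp (u - t) * (ε * (|t| + (t - u)) + D) := h2
      _ = (ε * |t| + D) * Real.exp (u - t) + ε * ((t - u) * Real.exp (u - t)) := by ring
      _ ≤ (ε * |t| + D) * Real.exp (u - t) + ε * (2 * Real.exp ((u - t)/2)) := by
          have := mul_le_mul_of_nonneg_left h4 hε.le
          linarith
      _ = (ε * |t| + D) * Real.exp (u - t) + 2 * ε * Real.exp ((1/2) * (u - t)) := by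
          rw [show (1/2 : ℝ) * (u - t) = (u - t)/2 by ring]; ring
  have hae : ∀ᵐ u ∂(volume.restrict (Iic t)), ‖Real.exp (u - t) * ω u‖ ≤ g u :=
    (ae_restrict_iff' measurableSet_Iic).mpr (ae_of_all _ hpt)
  have hmeas : AEStronglyMeasurable (fun u => Real.exp (u - t) * ω u)
      (volume.restrict (Iic t)) :=
    ((Real.continuous_exp.comp (continuous_id.sub continuous_const)).mul hω).aestronglyMeasurable.restrict
  have hint : IntegrableOn (fun u => Real.exp (u - t) * ω u) (Iic t) :=
    Integrable.mono' hg hmeas hae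
  refine ⟨hint, ?_⟩
  calc |∫ u in Iic t, Real.exp (u - t) * ω u| ≤ ∫ u in Iic t, g u := by
        rw [← Real.norm_eq_abs]
        exact norm_integral_le_of_norm_le hg hae
    _ = ε * |t| + (D + 4 * ε) := by
        rw [hg_def]
        rw [integral_add ((expc_integrableOn' one_pos t).const_mul _)
          ((expc_integrableOn' (by norm_num : (0:ℝ) < 1/2) t).const_mul _)]
        rw [integral_const_mul, integral_const_mul, expc_integral' one_pos t,
          expc_integral' (by norm_num : (0:ℝ) < 1/2) t]
        norm_num
        ring

private lemma ou_tendsto_sublinear {I : ℝ → ℝ}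
    (h : ∀ ε > 0, ∃ C : ℝ, 0 ≤ C ∧ ∀ t, |I t| ≤ ε * |t| + C) :
    Tendsto (fun t => I t / t) atTop (𝓝 0) ∧ Tendsto (fun t => I t / t) atBot (𝓝 0) := by
  have key : ∀ ε > 0, ∃ R : ℝ, 0 < R ∧ ∀ t : ℝ, R ≤ |t| → |I t / t| < ε := by
    intro ε hε
    obtain ⟨C, hC0, hC⟩ := h (ε/2) (by linarith)
    refine ⟨max 1 ((C+1)/(ε/2)), lt_of_lt_of_le one_pos (le_max_left _ _), fun t ht => ?_⟩
    have ht1 : (1:ℝ) ≤ |t| := le_trans (le_max_left _ _) ht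
    have htpos : (0:ℝ) < |t| := by linarith
    have h2 : (C+1)/(ε/2) ≤ |t| := le_trans (le_max_right _ _) ht
    have h3 : (C+1) ≤ ε/2 * |t| := by
      rw [div_le_iff₀ (by linarith)] at h2; linarith
    rw [abs_div, div_lt_iff₀ htpos]
    calc |I t| ≤ ε/2 * |t| + C := hC t
      _ < ε/2 * |t| + (C+1) := by linarith
      _ ≤ ε/2 * |t| + ε/2 * |t| := by linarith
      _ = ε * |t| := by ring
  constructor
  · rw [NormedAddCommGroup.tendsto_nhds_zero]
    intro ε hε
    obtain ⟨R, hR, hRf⟩ := key ε hε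
    filter_upwards [eventually_ge_atTop R] with t ht
    rw [Real.norm_eq_abs]
    exact hRf t (le_trans ht (le_abs_self t))
  · rw [NormedAddCommGroup.tendsto_nhds_zero]
    intro ε hε
    obtain ⟨R, hR, hRf⟩ := key ε hε
    filter_upwards [eventually_le_atBot (-R)] with t ht
    rw [Real.norm_eq_abs]
    exact hRf t (by linarith [neg_abs_le t])

end OUAux

/-- Sublinear growth of the stationary Ornstein–Uhlenbeck solution: if `ω : ℝ → ℝ` is
continuous with `ω t / t → 0` as `t → ±∞`, and `z t = ω t − ∫_{−∞}^t e^{u−t} ω u du`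
(the integral converging absolutely for each `t`), then `z t / t → 0` as `t → ±∞`. -/
theorem ou_sublinear_growth
    (ω : ℝ → ℝ) (hω : Continuous ω)
    (htop : Tendsto (fun t => ω t / t) atTop (𝓝 0))
    (hbot : Tendsto (fun t => ω t / t) atBot (𝓝 0))
    (z : ℝ → ℝ)
    (hz : ∀ t : ℝ, z t = ω t - ∫ u in Set.Iic t, Real.exp (u - t) * ω u) :
    (∀ t : ℝ, IntegrableOn (fun u => Real.exp (u - t) * ω u) (Set.Iic t)) ∧
    Tendsto (fun t => z t / t) atTop (𝓝 0) ∧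
    Tendsto (fun t => z t / t) atBot (𝓝 0) := by
  set I : ℝ → ℝ := fun t => ∫ u in Set.Iic t, Real.exp (u - t) * ω u with hI_def
  have hbdd : ∀ ε > 0, ∃ C : ℝ, 0 ≤ C ∧ ∀ t, |I t| ≤ ε * |t| + C := by
    intro ε hε
    obtain ⟨D, hD0, hlin⟩ := ou_lin_bound ω hω htop hbot hε
    refine ⟨D + 4 * ε, by linarith, fun t => ?_⟩
    exact (ou_key_bound ω hω hε hlin t).2
  obtain ⟨hItop, hIbot⟩ := ou_tendsto_sublinear hbdd
  have hint : ∀ t : ℝ, IntegrableOn (fun u => Real.exp (u - t) * ω u) (Set.Iic t) := by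
    intro t
    obtain ⟨D, hD0, hlin⟩ := ou_lin_bound ω hω htop hbot one_pos
    exact (ou_key_bound ω hω one_pos hlin t).1
  refine ⟨hint, ?_, ?_⟩
  · have hfun : (fun t => z t / t) = fun t => ω t / t - I t / t := by
      funext t; rw [hz t, sub_div]
    rw [hfun]
    simpa using htop.sub hItop
  · have hfun : (fun t => z t / t) = fun t => ω t / t - I t / t := by
      funext t; rw [hz t, sub_div]
    rw [hfun]
    simpa using hbot.sub hIbot
end

section
/- (Uniform upper semicontinuity of pullback attractors, step in the proof of Theorem 5.1.) Let (X,d) be a metric space, {T₀(t)}_{t≥0} a semigroup of maps of X (T₀(0) = id, T₀(t+s) = T₀(t) ∘ T₀(s)), K ⊆ X a nonempty set and 𝒜₀ ⊆ X a set with dist(T₀(t)K, 𝒜₀) → 0 as t → +∞. For each η ∈ (0,1] let S_η = {S_η(t,s) : t ≥ s} be an evolution process on X and {𝒜_η(t)}_{t∈ℝ} a family of nonempty sets with 𝒜_η(t) ⊆ K and S_η(t,s)𝒜_η(s) = 𝒜_η(t) for all t ≥ s. Assume that for every T > 0, sup_{s∈ℝ} sup_{x∈K} d(S_η(s+T, s)x,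 T₀(T)x) → 0 as η → 0. Then sup_{t∈ℝ} dist(𝒜_η(t), 𝒜₀) → 0 as η → 0, where dist(A,B) = sup_{a∈A} inf_{b∈B} d(a,b) is the Hausdorff semidistance. -/
open Filter Topology

/-- Uniform upper semicontinuity of pullback attractors: if `T₀` is a semigroup whose
action on `K` is attracted by `𝒜₀`, the attractors `A η t` of the evolution processes
`S η` are contained in `K` and invariant, and `S η` converges to `T₀` uniformly on `K`
over time-length `T` windows as `η → 0`, then `sup_t dist(A η t, 𝒜₀) → 0` as `η → 0`. -/
theorem uniform_upper_semicontinuity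
    {X : Type*} [MetricSpace X]
    -- the limiting semigroup
    (T₀ : ℝ → X → X)
    (hT₀0 : T₀ 0 = id)
    (hT₀sg : ∀ t s : ℝ, 0 ≤ t → 0 ≤ s → T₀ (t + s) = T₀ t ∘ T₀ s)
    -- the set `K` and attraction of `T₀ t K` by `𝒜₀`
    (K : Set X) (hK : K.Nonempty)
    (A₀ : Set X)
    (hattr : ∀ ε > (0:ℝ), ∃ T : ℝ, ∀ t ≥ T, ∀ x ∈ K, Metric.infDist (T₀ t x) A₀ < ε)
    -- the evolution processes `S η`, for `η ∈ (0,1]`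
    (S : ℝ → ℝ → ℝ → X → X)
    (hSid : ∀ η ∈ Set.Ioc (0:ℝ) 1, ∀ t : ℝ, S η t t = id)
    (hScomp : ∀ η ∈ Set.Ioc (0:ℝ) 1, ∀ t s r : ℝ, r ≤ s → s ≤ t →
      S η t s ∘ S η s r = S η t r)
    -- their invariant families of nonempty sets contained in `K`
    (A : ℝ → ℝ → Set X)
    (hAne : ∀ η ∈ Set.Ioc (0:ℝ) 1, ∀ t : ℝ, (A η t).Nonempty)
    (hAK : ∀ η ∈ Set.Ioc (0:ℝ) 1, ∀ t : ℝ, A η t ⊆ K)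
    (hAinv : ∀ η ∈ Set.Ioc (0:ℝ) 1, ∀ t s : ℝ, s ≤ t → S η t s '' A η s = A η t)
    -- uniform convergence of the processes to the semigroup on `K`
    (hconv : ∀ T > (0:ℝ), ∀ ε > (0:ℝ), ∃ η₀ > (0:ℝ), ∀ η : ℝ,
      0 < η → η ≤ η₀ → η ≤ 1 →
      ∀ s : ℝ, ∀ x ∈ K, dist (S η (s + T) s x) (T₀ T x) ≤ ε) :
    ∀ ε > (0:ℝ), ∃ η₀ > (0:ℝ), ∀ η : ℝ, 0 < η → η ≤ η₀ → η ≤ 1 →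
      ∀ t : ℝ, ∀ a ∈ A η t, Metric.infDist a A₀ < ε := by
  intro ε hε
  obtain ⟨T, hT⟩ := hattr (ε/3) (by linarith)
  set T₁ : ℝ := max T 1 with hT₁def
  have hT₁pos : 0 < T₁ := lt_of_lt_of_le one_pos (le_max_right _ _)
  obtain ⟨η₀, hη₀pos, hη₀⟩ := hconv T₁ hT₁pos (ε/3) (by linarith)
  refine ⟨η₀, hη₀pos, ?_⟩
  intro η hη hηη₀ hη1 t a ha
  have hηmem : η ∈ Set.Ioc (0:ℝ) 1 := ⟨hη, hη1⟩
  have hinv := hAinv η hηmem t (t - T₁) (by linarith)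
  rw [← hinv] at ha
  obtain ⟨b, hb, rfl⟩ := ha
  have hbK : b ∈ K := hAK η hηmem _ hb
  have h1 : dist (S η t (t - T₁) b) (T₀ T₁ b) ≤ ε/3 := by
    have := hη₀ η hη hηη₀ hη1 (t - T₁) b hbK
    simpa using this
  have h2 : Metric.infDist (T₀ T₁ b) A₀ < ε/3 :=
    hT T₁ (le_max_left _ _) b hbK
  calc Metric.infDist (S η t (t - T₁) b) A₀
      ≤ Metric.infDist (T₀ T₁ b) A₀ + dist (S η t (t - T₁) b) (T₀ T₁ b) :=
        Metric.infDist_le_infDist_add_dist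
    _ < ε/3 + ε/3 := by linarith
    _ < ε := by linarith
end

section
/- (Abstract lower semicontinuity of pullback attractors, the mechanism of the proof of Theorem 5.1, item (4).) Let X be a Banach space, {T₀(t)}_{t≥0} a semigroup of continuous maps of X (T₀(0) = id, T₀(t+s) = T₀(t) ∘ T₀(s)), and for each η ∈ (0,1] let S_η = {S_η(t,s) : t ≥ s} be an evolution process on X with a family of nonempty sets {A_η(r)}_{r∈ℝ} satisfying S_η(t,s)A_η(s) = A_η(t) for t ≥ s. Let A₀ ⊆ X be nonempty and compact, and fix t ∈ ℝ. Assume: (i) for all T, r > 0, sup_{τ∈[0,T]} sup_{s∈ℝ} sup_{‖z‖≤r} ‖S_η(s+τ, s)z − T₀(τ)z‖ → 0 as η → 0; and (ii) for every x₀ ∈ A₀ and every sequence η_k → 0 there exist s ≥ 0, z₀ ∈ X with T₀(s)z₀ = x₀, and points z_k ∈ A_{η_k}(t−s) with z_k → z₀. Then dist(A₀, A_η(t)) → 0 as η → 0, where dist(A,B) = sup_{a∈A} inf_{b∈B} ‖a−b‖. -/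
/-!
Argue by contradiction: a failure of the conclusion yields `ηₖ → 0` and points `xₖ ∈ A₀` at
distance at least `ε` from `A ηₖ t`; by compactness `xₖ → x₀ ∈ A₀` along a subsequence. Writing
`x₀ = T₀ s z₀` with `zₖ ∈ A ηₖ (t - s)`, `zₖ → z₀`, the points `S ηₖ t (t - s) zₖ` lie in `A ηₖ t`
by invariance and converge to `T₀ s z₀ = x₀`, because the convergence of `S η` to `T₀` is uniform
on the bounded set `{zₖ}` and `T₀ s` is continuous.
-/

open Filter Topology Metric

theorem Metric.tendsto_infDist_zero_of_tendsto {α ι : Type*} [PseudoMetricSpace α]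
    {l : Filter ι} {x : α} {y : ι → α} {B : ι → Set α} (hyB : ∀ᶠ i in l, y i ∈ B i)
    (hyx : Tendsto y l (𝓝 x)) : Tendsto (fun i => infDist x (B i)) l (𝓝 0) := by
  refine squeeze_zero' (Eventually.of_forall fun _ => infDist_nonneg) ?_
    (tendsto_iff_dist_tendsto_zero.1 hyx)
  filter_upwards [hyB] with i hi
  simpa only [dist_comm] using infDist_le_dist_of_mem hi

theorem exists_forall_infDist_lt_of_tendsto {X : Type*} [PseudoMetricSpace X] {K : Set X}
    (hK : IsCompact K) {B : ℝ → Set X}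
    (hB : ∀ x ∈ K, ∀ ηk : ℕ → ℝ, (∀ k, ηk k ∈ Set.Ioc (0:ℝ) 1) → Tendsto ηk atTop (𝓝 0) →
      Tendsto (fun k => infDist x (B (ηk k))) atTop (𝓝 0)) :
    ∀ ε > (0:ℝ), ∃ η₀ > (0:ℝ), ∀ η : ℝ, 0 < η → η ≤ η₀ → η ≤ 1 →
      ∀ x ∈ K, infDist x (B η) < ε := by
  by_contra! hbad
  obtain ⟨ε, hε, hbad⟩ := hbad
  have hfar : ∀ k : ℕ, ∃ η ∈ Set.Ioc (0:ℝ) 1, η ≤ 1 / (k + 1) ∧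
      ∃ x ∈ K, ε ≤ infDist x (B η) := fun k => by
    obtain ⟨η, hη, hηk, hη1, hx⟩ := hbad (min 1 (1 / (k + 1))) (by positivity)
    exact ⟨η, ⟨hη, hη1⟩, hηk.trans (min_le_right _ _), hx⟩
  choose η hη hηle x hxK hxfar using hfar
  have hη0 : Tendsto η atTop (𝓝 0) :=
    squeeze_zero (fun k => (hη k).1.le) hηle tendsto_one_div_add_atTop_nhds_zero_nat
  obtain ⟨x₀, hx₀K, φ, hφ, hxφ⟩ := hK.tendsto_subseq hxK
  have hnear : Tendsto (fun k => infDist x₀ (B (η (φ k))) + dist (x (φ k)) x₀) atTop (𝓝 0) := by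
    simpa using (hB x₀ hx₀K _ (fun k => hη (φ k)) (hη0.comp hφ.tendsto_atTop)).add
      (tendsto_iff_dist_tendsto_zero.1 hxφ)
  obtain ⟨k, hk⟩ := (hnear.eventually (gt_mem_nhds hε)).exists
  exact (hxfar (φ k)).not_gt (infDist_le_infDist_add_dist.trans_lt hk)

section UniformConvergence

variable {X : Type*} [NormedAddCommGroup X] {T₀ : ℝ → X → X} {S : ℝ → ℝ → ℝ → X → X}
  {ηk : ℕ → ℝ} {zk : ℕ → X} {τ : ℝ}

theorem tendsto_process_sub_semigroup
    (hconv : ∀ T > (0:ℝ), ∀ r > (0:ℝ), ∀ ε > (0:ℝ), ∃ η₀ > (0:ℝ), ∀ η : ℝ,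
      0 < η → η ≤ η₀ → η ≤ 1 →
      ∀ τ ∈ Set.Icc (0:ℝ) T, ∀ s : ℝ, ∀ z : X, ‖z‖ ≤ r →
        ‖S η (s + τ) s z - T₀ τ z‖ ≤ ε)
    (hηk : ∀ k, ηk k ∈ Set.Ioc (0:ℝ) 1) (hηk0 : Tendsto ηk atTop (𝓝 0))
    {R : ℝ} (hR : 0 < R) (hzk : ∀ᶠ k in atTop, ‖zk k‖ ≤ R) (hτ : 0 ≤ τ) (r : ℝ) :
    Tendsto (fun k => S (ηk k) (r + τ) r (zk k) - T₀ τ (zk k)) atTop (𝓝 0) := by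
  refine tendsto_zero_iff_norm_tendsto_zero.2 (Metric.tendsto_nhds.2 fun ε hε => ?_)
  obtain ⟨η₀, hη₀, hclose⟩ := hconv (τ + 1) (by linarith) R hR (ε / 2) (half_pos hε)
  filter_upwards [hηk0.eventually (eventually_le_nhds hη₀), hzk] with k hk hzk
  rw [Real.dist_0_eq_abs, abs_norm]
  exact (hclose _ (hηk k).1 hk (hηk k).2 τ ⟨hτ, by linarith⟩ r _ hzk).trans_lt (half_lt_self hε)

theorem tendsto_process_of_tendsto
    (hconv : ∀ T > (0:ℝ), ∀ r > (0:ℝ), ∀ ε > (0:ℝ), ∃ η₀ > (0:ℝ), ∀ η : ℝ,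
      0 < η → η ≤ η₀ → η ≤ 1 →
      ∀ τ ∈ Set.Icc (0:ℝ) T, ∀ s : ℝ, ∀ z : X, ‖z‖ ≤ r →
        ‖S η (s + τ) s z - T₀ τ z‖ ≤ ε)
    (hηk : ∀ k, ηk k ∈ Set.Ioc (0:ℝ) 1) (hηk0 : Tendsto ηk atTop (𝓝 0))
    {z₀ : X} (hzk : Tendsto zk atTop (𝓝 z₀)) (hT₀ : ContinuousAt (T₀ τ) z₀) (hτ : 0 ≤ τ)
    (r : ℝ) : Tendsto (fun k => S (ηk k) (r + τ) r (zk k)) atTop (𝓝 (T₀ τ z₀)) := by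
  have hbdd : ∀ᶠ k in atTop, ‖zk k‖ ≤ ‖z₀‖ + 1 :=
    hzk.norm.eventually (eventually_le_nhds (lt_add_one _))
  simpa using (tendsto_process_sub_semigroup hconv hηk hηk0 (by positivity) hbdd hτ r).add
    (hT₀.tendsto.comp hzk)

end UniformConvergence

theorem abstract_lower_semicontinuity_general
    {X : Type*} [NormedAddCommGroup X]
    -- the limiting semigroup of continuous maps
    (T₀ : ℝ → X → X)
    (hT₀cont : ∀ t : ℝ, 0 ≤ t → Continuous (T₀ t))
    -- the evolution processes `S η`, for `η ∈ (0,1]`, of continuous maps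
    (S : ℝ → ℝ → ℝ → X → X)
    -- invariant families of nonempty sets for `S η`
    (A : ℝ → ℝ → Set X)
    (hAinv : ∀ η ∈ Set.Ioc (0:ℝ) 1, ∀ t s : ℝ, s ≤ t → S η t s '' A η s = A η t)
    -- the limiting compact set and the fixed time
    (A₀ : Set X) (hA₀c : IsCompact A₀)
    (t : ℝ)
    -- (i) uniform convergence of the processes to the semigroup on bounded sets
    (hconv : ∀ T > (0:ℝ), ∀ r > (0:ℝ), ∀ ε > (0:ℝ), ∃ η₀ > (0:ℝ), ∀ η : ℝ,
      0 < η → η ≤ η₀ → η ≤ 1 →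
      ∀ τ ∈ Set.Icc (0:ℝ) T, ∀ s : ℝ, ∀ z : X, ‖z‖ ≤ r →
        ‖S η (s + τ) s z - T₀ τ z‖ ≤ ε)
    -- (ii) structural approximation of the points of `A₀`
    (hstruct : ∀ x₀ ∈ A₀, ∀ ηk : ℕ → ℝ, (∀ k, ηk k ∈ Set.Ioc (0:ℝ) 1) →
      Tendsto ηk atTop (𝓝 0) →
      ∃ s : ℝ, 0 ≤ s ∧ ∃ z₀ : X, T₀ s z₀ = x₀ ∧
        ∃ zk : ℕ → X, (∀ k, zk k ∈ A (ηk k) (t - s)) ∧ Tendsto zk atTop (𝓝 z₀)) :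
    ∀ ε > (0:ℝ), ∃ η₀ > (0:ℝ), ∀ η : ℝ, 0 < η → η ≤ η₀ → η ≤ 1 →
      ∀ x ∈ A₀, Metric.infDist x (A η t) < ε := by
  refine exists_forall_infDist_lt_of_tendsto hA₀c fun x₀ hx₀ ηk hηk hηk0 => ?_
  obtain ⟨s, hs, z₀, rfl, zk, hzkA, hzk⟩ := hstruct x₀ hx₀ ηk hηk hηk0
  refine tendsto_infDist_zero_of_tendsto (y := fun k => S (ηk k) t (t - s) (zk k))
    (Eventually.of_forall fun k => ?_) ?_
  · rw [← hAinv _ (hηk k) t (t - s) (by linarith)]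
    exact Set.mem_image_of_mem _ (hzkA k)
  · simpa using
      tendsto_process_of_tendsto hconv hηk hηk0 hzk (hT₀cont s hs).continuousAt hs (t - s)

/-- Abstract lower semicontinuity of pullback attractors (mechanism of the proof of
Theorem 5.1, item (4)): if the processes `S η` converge uniformly to the semigroup `T₀`
on bounded sets over compact time windows, and every `x₀ ∈ A₀` can be written as
`T₀ s z₀` with `z₀` approximated by points of `A (η_k) (t−s)` along every `η_k → 0`, then
`dist(A₀, A η t) → 0` as `η → 0`. -/
theorem abstract_lower_semicontinuity
    {X : Type*} [NormedAddCommGroup X] [NormedSpace ℝ X] [CompleteSpace X]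
    -- the limiting semigroup of continuous maps
    (T₀ : ℝ → X → X)
    (hT₀0 : T₀ 0 = id)
    (hT₀sg : ∀ t s : ℝ, 0 ≤ t → 0 ≤ s → T₀ (t + s) = T₀ t ∘ T₀ s)
    (hT₀cont : ∀ t : ℝ, 0 ≤ t → Continuous (T₀ t))
    -- the evolution processes `S η`, for `η ∈ (0,1]`, of continuous maps
    (S : ℝ → ℝ → ℝ → X → X)
    (hSid : ∀ η ∈ Set.Ioc (0:ℝ) 1, ∀ t : ℝ, S η t t = id)
    (hScomp : ∀ η ∈ Set.Ioc (0:ℝ) 1, ∀ t s r : ℝ, r ≤ s → s ≤ t →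
      S η t s ∘ S η s r = S η t r)
    (hScont : ∀ η ∈ Set.Ioc (0:ℝ) 1, ∀ t s : ℝ, s ≤ t → Continuous (S η t s))
    -- invariant families of nonempty sets for `S η`
    (A : ℝ → ℝ → Set X)
    (hAne : ∀ η ∈ Set.Ioc (0:ℝ) 1, ∀ r : ℝ, (A η r).Nonempty)
    (hAinv : ∀ η ∈ Set.Ioc (0:ℝ) 1, ∀ t s : ℝ, s ≤ t → S η t s '' A η s = A η t)
    -- the limiting compact set and the fixed time
    (A₀ : Set X) (hA₀c : IsCompact A₀) (hA₀ne : A₀.Nonempty)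
    (t : ℝ)
    -- (i) uniform convergence of the processes to the semigroup on bounded sets
    (hconv : ∀ T > (0:ℝ), ∀ r > (0:ℝ), ∀ ε > (0:ℝ), ∃ η₀ > (0:ℝ), ∀ η : ℝ,
      0 < η → η ≤ η₀ → η ≤ 1 →
      ∀ τ ∈ Set.Icc (0:ℝ) T, ∀ s : ℝ, ∀ z : X, ‖z‖ ≤ r →
        ‖S η (s + τ) s z - T₀ τ z‖ ≤ ε)
    -- (ii) structural approximation of the points of `A₀`
    (hstruct : ∀ x₀ ∈ A₀, ∀ ηk : ℕ → ℝ, (∀ k, ηk k ∈ Set.Ioc (0:ℝ) 1) →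
      Tendsto ηk atTop (𝓝 0) →
      ∃ s : ℝ, 0 ≤ s ∧ ∃ z₀ : X, T₀ s z₀ = x₀ ∧
        ∃ zk : ℕ → X, (∀ k, zk k ∈ A (ηk k) (t - s)) ∧ Tendsto zk atTop (𝓝 z₀)) :
    ∀ ε > (0:ℝ), ∃ η₀ > (0:ℝ), ∀ η : ℝ, 0 < η → η ≤ η₀ → η ≤ 1 →
      ∀ x ∈ A₀, Metric.infDist x (A η t) < ε :=
  abstract_lower_semicontinuity_general T₀ hT₀cont S A hAinv A₀ hA₀c t hconv hstruct
end
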